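/- For QSL(𝔄) formulae f and g, the quantitative entailment f ⊨ g (meaning ⟦f⟧(s,h) ≤ ⟦g⟧(s,h) for all states (s,h)) holds if and only if for every α in the finite set Eval(f), the classical separation-logic entailment ⌈f⌉_α ⊨ ⌈g⌉_α holds (i.e., every state satisfying ⌈f⌉_α also satisfies ⌈g⌉_α). -/
import Mathlib


namespace QSLPaper

open scoped Classical

noncomputable section

/-- Variables: a countably infinite set. -/
abbrev Var : Type := ℕ
/-- Values. -/
abbrev Val : Type := ℤ
/-- Locations: positive integers. -/
abbrev Loc : Type := ℕ+
/-- Stacks. -/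
abbrev Stack : Type := Var → Val
/-- Heaps: finite partial functions from locations to `k`-tuples of values. -/
abbrev Heap (k : ℕ) : Type := Finmap (fun _ : Loc => Fin k → Val)
/-- Program states: stack-heap pairs. -/
abbrev HState (k : ℕ) : Type := Stack × Heap k

/-- Syntax of separation logic `SL(𝔄)`; atoms are predicates, i.e. sets of states. -/
inductive SL (k : ℕ) : Type where
  | tt : SL k
  | atom (p : Set (HState k)) : SL k
  | not (φ : SL k) : SL k
  | and (φ ψ : SL k) : SL k
  | or (φ ψ : SL k) : SL k
  | ex (x : Var) (φ : SL k) : SL k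
  | all (x : Var) (φ : SL k) : SL k
  | sep (φ ψ : SL k) : SL k
  | wand (φ ψ : SL k) : SL k

/-- Standard separation-logic satisfaction relation `(s,h) ⊨ φ`. -/
def SL.sat {k : ℕ} : SL k → HState k → Prop
  | .tt, _ => True
  | .atom p, σ => σ ∈ p
  | .not φ, σ => ¬ φ.sat σ
  | .and φ ψ, σ => φ.sat σ ∧ ψ.sat σ
  | .or φ ψ, σ => φ.sat σ ∨ ψ.sat σ
  | .ex x φ, σ => ∃ v : Val, φ.sat (Function.update σ.1 x v, σ.2)
  | .all x φ, σ => ∀ v : Val, φ.sat (Function.update σ.1 x v, σ.2)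
  | .sep φ ψ, σ => ∃ h₁ h₂ : Heap k, h₁.Disjoint h₂ ∧ σ.2 = h₁ ∪ h₂ ∧
      φ.sat (σ.1, h₁) ∧ ψ.sat (σ.1, h₂)
  | .wand φ ψ, σ => ∀ h' : Heap k, σ.2.Disjoint h' → φ.sat (σ.1, h') →
      ψ.sat (σ.1, σ.2 ∪ h')

/-- A formula is pure if its satisfaction does not depend on the heap. -/
def SL.Pure {k : ℕ} (B : SL k) : Prop :=
  ∀ (s : Stack) (h h' : Heap k), B.sat (s, h) ↔ B.sat (s, h')

/-- All atoms of the formula belong to the set `𝔄` of atomic predicates. -/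
def SL.atomsIn {k : ℕ} (𝔄 : Set (Set (HState k))) : SL k → Prop
  | .tt => True
  | .atom p => p ∈ 𝔄
  | .not φ => φ.atomsIn 𝔄
  | .and φ ψ => φ.atomsIn 𝔄 ∧ ψ.atomsIn 𝔄
  | .or φ ψ => φ.atomsIn 𝔄 ∧ ψ.atomsIn 𝔄
  | .ex _ φ => φ.atomsIn 𝔄
  | .all _ φ => φ.atomsIn 𝔄
  | .sep φ ψ => φ.atomsIn 𝔄 ∧ ψ.atomsIn 𝔄
  | .wand φ ψ => φ.atomsIn 𝔄 ∧ ψ.atomsIn 𝔄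

/-- Syntax of quantitative separation logic `QSL(𝔄)`:
`f ::= [φ] | [B]·f + [¬B]·f | q·f + (1−q)·f | f·f | 1−f | max(f,f) | min(f,f) |
       Sup x: f | Inf x: f | f ⋆ f | [φ] ─⋆ f`. -/
inductive QSL (k : ℕ) : Type where
  | iver (φ : SL k) : QSL k
  | ite (B : SL k) (g u : QSL k) : QSL k
  | pch (q : ℚ) (g u : QSL k) : QSL k
  | mul (g u : QSL k) : QSL k
  | onem (g : QSL k) : QSL k
  | qmax (g u : QSL k) : QSL k
  | qmin (g u : QSL k) : QSL k
  | sup (x : Var) (g : QSL k) : QSL k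
  | inf (x : Var) (g : QSL k) : QSL k
  | sep (g u : QSL k) : QSL k
  | wand (φ : SL k) (g : QSL k) : QSL k

/-- Well-formedness: guards of conditionals are pure, and all probabilities
lie in `[0,1]`.  A term `f : QSL k` with `f.WF` (and atoms in `𝔄`)
is a `QSL(𝔄)` formula as generated by the grammar. -/
def QSL.WF {k : ℕ} : QSL k → Prop
  | .iver _ => True
  | .ite B g u => B.Pure ∧ g.WF ∧ u.WF
  | .pch q g u => 0 ≤ q ∧ q ≤ 1 ∧ g.WF ∧ u.WF
  | .mul g u => g.WF ∧ u.WF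
  | .onem g => g.WF
  | .qmax g u => g.WF ∧ u.WF
  | .qmin g u => g.WF ∧ u.WF
  | .sup _ g => g.WF
  | .inf _ g => g.WF
  | .sep g u => g.WF ∧ u.WF
  | .wand _ g => g.WF

/-- All atoms of a `QSL` formula belong to `𝔄`. -/
def QSL.atomsIn {k : ℕ} (𝔄 : Set (Set (HState k))) : QSL k → Prop
  | .iver φ => φ.atomsIn 𝔄
  | .ite B g u => B.atomsIn 𝔄 ∧ g.atomsIn 𝔄 ∧ u.atomsIn 𝔄
  | .pch _ g u => g.atomsIn 𝔄 ∧ u.atomsIn 𝔄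
  | .mul g u => g.atomsIn 𝔄 ∧ u.atomsIn 𝔄
  | .onem g => g.atomsIn 𝔄
  | .qmax g u => g.atomsIn 𝔄 ∧ u.atomsIn 𝔄
  | .qmin g u => g.atomsIn 𝔄 ∧ u.atomsIn 𝔄
  | .sup _ g => g.atomsIn 𝔄
  | .inf _ g => g.atomsIn 𝔄
  | .sep g u => g.atomsIn 𝔄 ∧ u.atomsIn 𝔄
  | .wand φ g => φ.atomsIn 𝔄 ∧ g.atomsIn 𝔄

/-- The semantics `⟦f⟧ : States → ℝ` of quantitative separation logic. -/
noncomputable def QSL.eval {k : ℕ} : QSL k → HState k → ℝ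
  | .iver φ, σ => if φ.sat σ then 1 else 0
  | .ite B g u, σ =>
      (if B.sat σ then (1 : ℝ) else 0) * g.eval σ +
      (if (SL.not B).sat σ then (1 : ℝ) else 0) * u.eval σ
  | .pch q g u, σ => (q : ℝ) * g.eval σ + (1 - (q : ℝ)) * u.eval σ
  | .mul g u, σ => g.eval σ * u.eval σ
  | .onem g, σ => 1 - g.eval σ
  | .qmax g u, σ => max (g.eval σ) (u.eval σ)
  | .qmin g u, σ => min (g.eval σ) (u.eval σ)
  | .sup x g, σ => sSup { r : ℝ | ∃ v : Val, r = g.eval (Function.update σ.1 x v, σ.2) }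
  | .inf x g, σ => sInf { r : ℝ | ∃ v : Val, r = g.eval (Function.update σ.1 x v, σ.2) }
  | .sep g u, σ => sSup { r : ℝ | ∃ h₁ h₂ : Heap k, h₁.Disjoint h₂ ∧ σ.2 = h₁ ∪ h₂ ∧
      r = g.eval (σ.1, h₁) * u.eval (σ.1, h₂) }
  | .wand φ g, σ =>
      if { r : ℝ | ∃ h' : Heap k, σ.2.Disjoint h' ∧ φ.sat (σ.1, h') ∧
            r = g.eval (σ.1, σ.2 ∪ h') } = (∅ : Set ℝ) then 1
      else sInf { r : ℝ | ∃ h' : Heap k, σ.2.Disjoint h' ∧ φ.sat (σ.1, h') ∧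
            r = g.eval (σ.1, σ.2 ∪ h') }

end

end QSLPaper

namespace QSLPaper

/-- The evaluation set `Eval(f) ⊆ [0,1]`, defined inductively on the syntax. -/
def QSL.evalSet {k : ℕ} : QSL k → Set ℝ
  | .iver _ => {0, 1}
  | .ite _ g u => g.evalSet ∪ u.evalSet
  | .pch q g u =>
      { r : ℝ | ∃ β ∈ g.evalSet, ∃ γ ∈ u.evalSet, r = (q : ℝ) * β + (1 - (q : ℝ)) * γ }
  | .mul g u => { r : ℝ | ∃ β ∈ g.evalSet, ∃ γ ∈ u.evalSet, r = β * γ }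
  | .onem g => { r : ℝ | ∃ β ∈ g.evalSet, r = 1 - β }
  | .qmax g u => g.evalSet ∪ u.evalSet
  | .qmin g u => g.evalSet ∪ u.evalSet
  | .sup _ g => g.evalSet
  | .inf _ g => g.evalSet
  | .sep g u => { r : ℝ | ∃ β ∈ g.evalSet, ∃ γ ∈ u.evalSet, r = β * γ }
  | .wand _ g => g.evalSet

end QSLPaper

namespace QSLPaper

open scoped Classical

/-- `Eval(f)` is a finite set. -/
lemma QSL.evalSet_finite {k : ℕ} (f : QSL k) : f.evalSet.Finite := by
  induction f with
  | iver φ => simpa [QSL.evalSet] using (Set.finite_singleton (0:ℝ)).insert 1 |>.subset (by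
      intro x hx; simpa [QSL.evalSet] using hx)
  | ite B g u ihg ihu => exact ihg.union ihu
  | pch q g u ihg ihu =>
      have : QSL.evalSet (.pch q g u) =
          Set.image2 (fun β γ => (q:ℝ) * β + (1 - (q:ℝ)) * γ) g.evalSet u.evalSet := by
        ext r; simp [QSL.evalSet, Set.image2, eq_comm]
      rw [this]; exact ihg.image2 _ ihu
  | mul g u ihg ihu =>
      have : QSL.evalSet (.mul g u) =
          Set.image2 (fun β γ => β * γ) g.evalSet u.evalSet := by
        ext r; simp [QSL.evalSet, Set.image2, eq_comm]
      rw [this]; exact ihg.image2 _ ihu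
  | onem g ihg =>
      have : QSL.evalSet (.onem g) = (fun β => 1 - β) '' g.evalSet := by
        ext r; simp [QSL.evalSet, eq_comm]
      rw [this]; exact ihg.image _
  | qmax g u ihg ihu => exact ihg.union ihu
  | qmin g u ihg ihu => exact ihg.union ihu
  | sup x g ihg => exact ihg
  | inf x g ihg => exact ihg
  | sep g u ihg ihu =>
      have : QSL.evalSet (.sep g u) =
          Set.image2 (fun β γ => β * γ) g.evalSet u.evalSet := by
        ext r; simp [QSL.evalSet, Set.image2, eq_comm]
      rw [this]; exact ihg.image2 _ ihu
  | wand φ g ihg => exact ihg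

/-- `Eval(f)` contains `0` and `1`. -/
lemma QSL.zero_one_mem_evalSet {k : ℕ} (f : QSL k) :
    (0 : ℝ) ∈ f.evalSet ∧ (1 : ℝ) ∈ f.evalSet := by
  induction f with
  | iver φ => constructor <;> simp [QSL.evalSet]
  | ite B g u ihg ihu => exact ⟨Or.inl ihg.1, Or.inl ihg.2⟩
  | pch q g u ihg ihu =>
      constructor
      · exact ⟨0, ihg.1, 0, ihu.1, by ring⟩
      · exact ⟨1, ihg.2, 1, ihu.2, by ring⟩
  | mul g u ihg ihu =>
      exact ⟨⟨0, ihg.1, 0, ihu.1, by ring⟩, ⟨1, ihg.2, 1, ihu.2, by ring⟩⟩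
  | onem g ihg => exact ⟨⟨1, ihg.2, by ring⟩, ⟨0, ihg.1, by ring⟩⟩
  | qmax g u ihg ihu => exact ⟨Or.inl ihg.1, Or.inl ihg.2⟩
  | qmin g u ihg ihu => exact ⟨Or.inl ihg.1, Or.inl ihg.2⟩
  | sup x g ihg => exact ihg
  | inf x g ihg => exact ihg
  | sep g u ihg ihu =>
      exact ⟨⟨0, ihg.1, 0, ihu.1, by ring⟩, ⟨1, ihg.2, 1, ihu.2, by ring⟩⟩
  | wand φ g ihg => exact ihg

/-- The value of a `QSL` formula at any state lies in its evaluation set. -/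
lemma QSL.eval_mem_evalSet {k : ℕ} (f : QSL k) (σ : HState k) :
    f.eval σ ∈ f.evalSet := by
  induction f generalizing σ with
  | iver φ =>
      by_cases h : φ.sat σ <;> simp [QSL.eval, QSL.evalSet, h]
  | ite B g u ihg ihu =>
      by_cases h : B.sat σ
      · have : QSL.eval (.ite B g u) σ = g.eval σ := by
          simp [QSL.eval, SL.sat, h]
        rw [this]; exact Or.inl (ihg σ)
      · have : QSL.eval (.ite B g u) σ = u.eval σ := by
          simp [QSL.eval, SL.sat, h]
        rw [this]; exact Or.inr (ihu σ)
  | pch q g u ihg ihu => exact ⟨g.eval σ, ihg σ, u.eval σ, ihu σ, rfl⟩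
  | mul g u ihg ihu => exact ⟨g.eval σ, ihg σ, u.eval σ, ihu σ, rfl⟩
  | onem g ihg => exact ⟨g.eval σ, ihg σ, rfl⟩
  | qmax g u ihg ihu =>
      rcases max_cases (g.eval σ) (u.eval σ) with ⟨h, _⟩ | ⟨h, _⟩
      · rw [show QSL.eval (.qmax g u) σ = max (g.eval σ) (u.eval σ) from rfl, h]
        exact Or.inl (ihg σ)
      · rw [show QSL.eval (.qmax g u) σ = max (g.eval σ) (u.eval σ) from rfl, h]
        exact Or.inr (ihu σ)
  | qmin g u ihg ihu =>
      rcases min_cases (g.eval σ) (u.eval σ) with ⟨h, _⟩ | ⟨h, _⟩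
      · rw [show QSL.eval (.qmin g u) σ = min (g.eval σ) (u.eval σ) from rfl, h]
        exact Or.inl (ihg σ)
      · rw [show QSL.eval (.qmin g u) σ = min (g.eval σ) (u.eval σ) from rfl, h]
        exact Or.inr (ihu σ)
  | sup x g ihg =>
      set S := { r : ℝ | ∃ v : Val, r = g.eval (Function.update σ.1 x v, σ.2) } with hS
      have hsub : S ⊆ g.evalSet := by
        rintro r ⟨v, rfl⟩; exact ihg _
      have hfin : S.Finite := (g.evalSet_finite).subset hsub
      have hne : S.Nonempty := ⟨_, 0, rfl⟩
      have : sSup S ∈ S := hne.csSup_mem hfin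
      exact hsub this
  | inf x g ihg =>
      set S := { r : ℝ | ∃ v : Val, r = g.eval (Function.update σ.1 x v, σ.2) } with hS
      have hsub : S ⊆ g.evalSet := by
        rintro r ⟨v, rfl⟩; exact ihg _
      have hfin : S.Finite := (g.evalSet_finite).subset hsub
      have hne : S.Nonempty := ⟨_, 0, rfl⟩
      have : sInf S ∈ S := hne.csInf_mem hfin
      exact hsub this
  | sep g u ihg ihu =>
      set S := { r : ℝ | ∃ h₁ h₂ : Heap k, h₁.Disjoint h₂ ∧ σ.2 = h₁ ∪ h₂ ∧
        r = g.eval (σ.1, h₁) * u.eval (σ.1, h₂) } with hS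
      have hsub : S ⊆ QSL.evalSet (.sep g u) := by
        rintro r ⟨h₁, h₂, _, _, rfl⟩
        exact ⟨_, ihg _, _, ihu _, rfl⟩
      have hfin : S.Finite := (QSL.evalSet_finite (.sep g u)).subset hsub
      have hne : S.Nonempty := by
        refine ⟨_, ∅, σ.2, ?_, ?_, rfl⟩
        · intro a ha; simp only [Finmap.notMem_empty] at ha
        · exact (Finmap.empty_union).symm
      have : sSup S ∈ S := hne.csSup_mem hfin
      exact hsub this
  | wand φ g ihg =>
      set S := { r : ℝ | ∃ h' : Heap k, σ.2.Disjoint h' ∧ φ.sat (σ.1, h') ∧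
        r = g.eval (σ.1, σ.2 ∪ h') } with hS
      have hsub : S ⊆ g.evalSet := by
        rintro r ⟨h', _, _, rfl⟩; exact ihg _
      by_cases h : S = (∅ : Set ℝ)
      · have : QSL.eval (.wand φ g) σ = 1 := by simp [QSL.eval, ← hS, h]
        rw [this]; exact (g.zero_one_mem_evalSet).2
      · have hne : S.Nonempty := Set.nonempty_iff_ne_empty.mpr h
        have hfin : S.Finite := (g.evalSet_finite).subset hsub
        have : QSL.eval (.wand φ g) σ = sInf S := by simp [QSL.eval, ← hS, h]
        rw [this]
        exact hsub (hne.csInf_mem hfin)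

/-- For `QSL(𝔄)` formulae `f` and `g`, the quantitative
entailment `f ⊨ g` (i.e. `⟦f⟧(s,h) ≤ ⟦g⟧(s,h)` for all states) holds if and
only if for every `α` in the finite set `Eval(f)`, the classical
separation-logic entailment `⌈f⌉_α ⊨ ⌈g⌉_α` holds, where `⌈f⌉_α` (resp.
`⌈g⌉_α`) is an `SL(𝔄)` formula characterized by
`(s,h) ⊨ ⌈f⌉_α ↔ α ≤ ⟦f⟧(s,h)`. -/
theorem qsl_entailment_iff_sl_entailments {k : ℕ} (hk : 1 ≤ k)
    (𝔄 : Set (Set (HState k))) (f g : QSL k)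
    (hfWF : f.WF) (hfA : f.atomsIn 𝔄) (hgWF : g.WF) (hgA : g.atomsIn 𝔄)
    (F G : ℝ → SL k)
    (hF : ∀ α ∈ f.evalSet, ∀ σ : HState k, (F α).sat σ ↔ α ≤ f.eval σ)
    (hG : ∀ α ∈ f.evalSet, ∀ σ : HState k, (G α).sat σ ↔ α ≤ g.eval σ) :
    (∀ σ : HState k, f.eval σ ≤ g.eval σ) ↔
      (∀ α ∈ f.evalSet, ∀ σ : HState k, (F α).sat σ → (G α).sat σ) := by
  constructor
  · intro hent α hα σ hFσ
    exact (hG α hα σ).mpr (le_trans ((hF α hα σ).mp hFσ) (hent σ))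
  · intro hcl σ
    have hα : f.eval σ ∈ f.evalSet := f.eval_mem_evalSet σ
    have hFσ : (F (f.eval σ)).sat σ := (hF _ hα σ).mpr le_rfl
    exact (hG _ hα σ).mp (hcl _ hα σ hFσ)

end QSLPaper
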